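/- Let k be a perfect field of characteristic p, K = Frac(k[[t_1,...,t_n]]), and f ∈ k[[t]]. For every r ∈ {0,...,p-1}^n, the composition S_r ∘ res equals res ∘ S_{f,r,p-1} as maps from K((T)) to K, where S_r is the section operator on K associated with the monomial basis, and S_{f,r,p-1} is the section operator on K((T)) associated with the basis (t^r (f+T)^s). -/

import Mathlib

set_option synthInstance.maxHeartbeats 1000000
set_option maxHeartbeats 1000000

open scoped Classical

/-- The Frobenius on multivariate power series: `Σ a_i t^i ↦ Σ a_i^p t^{p·i}`. -/
noncomputable def frobMv {n : ℕ} {k : Type*} [CommSemiring k] (p : ℕ)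
    (g : MvPowerSeries (Fin n) k) : MvPowerSeries (Fin n) k :=
  fun i => if ∀ j, p ∣ i j then
    (MvPowerSeries.coeff (R := k) (Finsupp.mapRange (· / p) (Nat.zero_div p) i) g) ^ p else 0

/-!
The residue of `(f + T)^s · F(y)` for `s < p` only sees the `T^{-p}` coefficient of `F(y)`,
which is `F(res y)`, and only when `s = p - 1`: all other exponents `-1 - m`, `0 ≤ m < p - 1`,
are not divisible by `p`. Taking residues in the expansion of `x` therefore gives
`res x = Σ_r t^r F(res S_{f,r,p-1}(x))`, and the claim follows from the uniqueness of the
expansion over `t^r`. Uniqueness is checked in `k[[t]]` by reading off the coefficient of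
`t^{p d + r}`, after clearing a common denominator.
-/

namespace MvPowerSeries

theorem prod_X_pow_eq_monomial {σ R : Type*} [Fintype σ] [CommSemiring R] (e : σ → ℕ) :
    ∏ i, (X i : MvPowerSeries σ R) ^ e i = monomial (Finsupp.equivFunOnFinite.symm e) 1 := by
  rw [monomial_one_eq, Finsupp.prod_fintype _ _ (fun _ => pow_zero _)]
  simp

end MvPowerSeries

section Frobenius

open MvPowerSeries

variable {n : ℕ} {k : Type*} [CommSemiring k]

theorem coeff_nsmul_frobMv {p : ℕ} (hp : 0 < p) (d : Fin n →₀ ℕ) (g : MvPowerSeries (Fin n) k) :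
    coeff (p • d) (frobMv p g) = coeff d g ^ p := by
  have hd : Finsupp.mapRange (· / p) (Nat.zero_div p) (p • d) = d := by
    ext j
    simp [Nat.mul_div_cancel_left _ hp]
  simp [coeff_apply, frobMv, hd]

theorem coeff_monomial_mul_frobMv {p : ℕ} (hp : 0 < p) (d e e₀ : Fin n →₀ ℕ)
    (he : ∀ i, e i < p) (he₀ : ∀ i, e₀ i < p) (g : MvPowerSeries (Fin n) k) :
    coeff (p • d + e₀) (monomial e 1 * frobMv p g) = if e = e₀ then coeff d g ^ p else 0 := by
  rw [coeff_monomial_mul]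
  split_ifs with hle heq heq
  · subst heq
    rw [add_tsub_cancel_right, one_mul, coeff_nsmul_frobMv hp]
  · rw [one_mul, coeff_apply, frobMv, if_neg]
    refine fun hdvd => heq (Finsupp.ext fun i => ?_)
    have hle_i : e i ≤ p * d i + e₀ i := by simpa using hle i
    have hmod : e i ≡ p * d i + e₀ i [MOD p] := by
      simpa [Nat.modEq_iff_dvd' hle_i] using hdvd i
    exact (hmod.trans (Nat.modEq_iff_dvd.mpr (by simp))).eq_of_lt_of_lt (he i) (he₀ i)
  · exact absurd (heq ▸ le_add_self) hle
  · rfl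

theorem eq_zero_of_sum_prod_X_pow_mul_frobMv_eq_zero [IsReduced k] {p : ℕ} (hp : 0 < p)
    (g : (Fin n → Fin p) → MvPowerSeries (Fin n) k)
    (hg : ∑ r, (∏ i, (X i : MvPowerSeries (Fin n) k) ^ (r i : ℕ)) * frobMv p (g r) = 0)
    (r₀ : Fin n → Fin p) : g r₀ = 0 := by
  let e : (Fin n → Fin p) → Fin n →₀ ℕ := fun r => Finsupp.equivFunOnFinite.symm fun i => r i
  have he_lt : ∀ r i, e r i < p := fun r i => (r i).isLt
  have he_inj : Function.Injective e :=
    Finsupp.equivFunOnFinite.symm.injective.comp (Fin.val_injective.comp_left)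
  ext d
  have hterm : ∀ r, coeff (p • d + e r₀) ((∏ i, X i ^ (r i : ℕ)) * frobMv p (g r)) =
      if r = r₀ then coeff d (g r) ^ p else 0 := fun r => by
    rw [prod_X_pow_eq_monomial, coeff_monomial_mul_frobMv hp d _ _ (he_lt r) (he_lt r₀)]
    simp only [he_inj.eq_iff]
  have hcoeff := congrArg (coeff (p • d + e r₀)) hg
  rw [map_sum, Finset.sum_congr rfl fun r _ => hterm r, Finset.sum_ite_eq', map_zero,
    if_pos (Finset.mem_univ _)] at hcoeff
  exact eq_zero_of_pow_eq_zero hcoeff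

end Frobenius

theorem IsFractionRing.eq_zero_of_sum_algebraMap_mul_eq_zero {R K : Type*} [CommRing R]
    [CommRing K] [Algebra R K] [IsFractionRing R K] {ι : Type*} [Fintype ι] (e : ι → R)
    (φ : R → R) (F : K →+* K) (hF : ∀ g, F (algebraMap R K g) = algebraMap R K (φ g))
    (hR : ∀ g : ι → R, ∑ i, e i * φ (g i) = 0 → ∀ i, g i = 0)
    (a : ι → K) (ha : ∑ i, algebraMap R K (e i) * F (a i) = 0) (i : ι) : a i = 0 := by
  obtain ⟨b, hb⟩ := IsLocalization.exist_integer_multiples_of_finite (nonZeroDivisors R) a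
  choose g hg using hb
  have hsum : algebraMap R K (∑ i, e i * φ (g i)) = algebraMap R K 0 := calc
    _ = ∑ i, algebraMap R K (e i) * F (algebraMap R K (g i)) := by
      simp only [map_sum, map_mul, hF]
    _ = F (algebraMap R K b) * ∑ i, algebraMap R K (e i) * F (a i) := by
      simp only [hg, Algebra.smul_def, map_mul, Finset.mul_sum]
      exact Finset.sum_congr rfl fun _ _ => by ring
    _ = _ := by rw [ha, mul_zero, map_zero]
  have hgi := hR g (IsFractionRing.injective R K hsum) i
  have hba : algebraMap R K b * a i = 0 := by rw [← Algebra.smul_def, ← hg, hgi, map_zero]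
  exact (IsLocalization.map_units K b).mul_right_eq_zero.mp hba

theorem Int.not_natCast_dvd_neg_of_pos_of_lt {p m : ℕ} (h0 : 0 < m) (hm : m < p) :
    ¬ (p : ℤ) ∣ -(m : ℤ) := by
  rw [dvd_neg, Int.natCast_dvd_natCast]
  exact Nat.not_dvd_of_pos_of_lt h0 hm

namespace LaurentSeries

open HahnSeries

variable {K : Type*} [CommRing K] {p : ℕ}

theorem coeff_neg_one_C_add_X_pow_mul {s : ℕ} (hs : s < p) (b : K) (z : LaurentSeries K)
    (hz : ∀ m, ¬ (p : ℤ) ∣ m → z.coeff m = 0) :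
    ((C b + single 1 1) ^ s * z).coeff (-1) = if s + 1 = p then z.coeff (-p) else 0 := by
  have hterm : ∀ m, (single (1 : ℤ) (1 : K) ^ m * C b ^ (s - m) * (s.choose m : LaurentSeries K)
      * z).coeff (-1) = b ^ (s - m) * s.choose m * z.coeff (-((m + 1 : ℕ) : ℤ)) := fun m => by
    have hrearrange : single (1 : ℤ) (1 : K) ^ m * C b ^ (s - m) * (s.choose m : LaurentSeries K)
        * z = C (b ^ (s - m) * s.choose m) * (single (m : ℤ) 1 * z) := by
      simp only [single_pow, one_pow, nsmul_one, map_mul, map_pow, map_natCast]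
      ring
    rw [hrearrange, C_mul_eq_smul, coeff_smul, coeff_single_mul, one_mul, smul_eq_mul,
      show (-1 : ℤ) - m = -((m + 1 : ℕ) : ℤ) by push_cast; ring]
  have hvanish : ∀ m, m + 1 < p → z.coeff (-((m + 1 : ℕ) : ℤ)) = 0 := fun m hm =>
    hz _ (Int.not_natCast_dvd_neg_of_pos_of_lt m.succ_pos hm)
  rw [add_comm, add_pow, Finset.sum_mul, coeff_sum, Finset.sum_eq_single s]
  · rw [hterm, Nat.sub_self, pow_zero, Nat.choose_self, Nat.cast_one, one_mul, one_mul]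
    split_ifs with hsp
    · rw [← hsp]
    · exact hvanish s (by omega)
  · intro m hm hms
    rw [hterm, hvanish m (by have := Finset.mem_range.mp hm; omega), mul_zero]
  · simp

theorem coeff_neg_one_sum_C_mul_C_add_X_pow_mul {ι : Type*} [Fintype ι] (e : ι → K) (b : K)
    (z : ι × Fin p → LaurentSeries K) (hz : ∀ rs m, ¬ (p : ℤ) ∣ m → (z rs).coeff m = 0)
    (s : Fin p) (hs : (s : ℕ) + 1 = p) :
    (∑ rs : ι × Fin p, C (e rs.1) * (C b + single 1 1) ^ (rs.2 : ℕ) * z rs).coeff (-1) =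
      ∑ i, e i * (z (i, s)).coeff (-p) := by
  have hterm : ∀ i (s' : Fin p), (C (e i) * (C b + single 1 1) ^ (s' : ℕ) * z (i, s')).coeff (-1)
      = if s' = s then e i * (z (i, s)).coeff (-p) else 0 := fun i s' => by
    rw [mul_assoc, C_mul_eq_smul, coeff_smul, smul_eq_mul,
      coeff_neg_one_C_add_X_pow_mul s'.isLt b _ (hz _)]
    rcases eq_or_ne s' s with rfl | h
    · rw [if_pos hs, if_pos rfl]
    · rw [if_neg fun h' => h (Fin.ext (by omega)), if_neg h, mul_zero]
  simp only [coeff_sum, Fintype.sum_prod_type, hterm, Finset.sum_ite_eq', Finset.mem_univ,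
    if_true]

end LaurentSeries

theorem stmt5_general (p n : ℕ) [Fact p.Prime] (k : Type*) [Field k]
    -- the Frobenius F on K = Frac(k[[t]])
    (F : FractionRing (MvPowerSeries (Fin n) k) →+* FractionRing (MvPowerSeries (Fin n) k))
    (hF : ∀ g : MvPowerSeries (Fin n) k,
      F (algebraMap (MvPowerSeries (Fin n) k) (FractionRing (MvPowerSeries (Fin n) k)) g)
        = algebraMap (MvPowerSeries (Fin n) k) (FractionRing (MvPowerSeries (Fin n) k))
            (frobMv p g))
    -- the section operators S_r on K, defined by the expansion over the monomial basis
    (S : (Fin n → Fin p) → FractionRing (MvPowerSeries (Fin n) k) →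
          FractionRing (MvPowerSeries (Fin n) k))
    (hS : ∀ g : FractionRing (MvPowerSeries (Fin n) k),
      g = ∑ r : Fin n → Fin p,
        (∏ i : Fin n,
          (algebraMap (MvPowerSeries (Fin n) k) (FractionRing (MvPowerSeries (Fin n) k))
            (MvPowerSeries.X i)) ^ ((r i : ℕ))) * F (S r g))
    -- the Frobenius F₂ on K((T)), extending F with F₂(T) = T^p
    (F₂ : LaurentSeries (FractionRing (MvPowerSeries (Fin n) k)) →+*
          LaurentSeries (FractionRing (MvPowerSeries (Fin n) k)))
    (hF₂ : ∀ (x : LaurentSeries (FractionRing (MvPowerSeries (Fin n) k))) (m : ℤ),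
      (F₂ x).coeff m = if (p : ℤ) ∣ m then F (x.coeff (m / p)) else 0)
    (f : MvPowerSeries (Fin n) k)
    -- the section operators S_{f,r,s} on K((T)), defined by the expansion over the
    -- basis t^r (f+T)^s
    (S₂ : (Fin n → Fin p) × Fin p → LaurentSeries (FractionRing (MvPowerSeries (Fin n) k)) →
          LaurentSeries (FractionRing (MvPowerSeries (Fin n) k)))
    (hS₂ : ∀ x : LaurentSeries (FractionRing (MvPowerSeries (Fin n) k)),
      x = ∑ rs : (Fin n → Fin p) × Fin p,
        HahnSeries.C (∏ i : Fin n,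
            (algebraMap (MvPowerSeries (Fin n) k) (FractionRing (MvPowerSeries (Fin n) k))
              (MvPowerSeries.X i)) ^ ((rs.1 i : ℕ)))
          * (HahnSeries.C (algebraMap (MvPowerSeries (Fin n) k)
                (FractionRing (MvPowerSeries (Fin n) k)) f)
             + HahnSeries.single (1 : ℤ) 1) ^ ((rs.2 : ℕ))
          * F₂ (S₂ rs x)) :
    -- conclusion: S_r ∘ res = res ∘ S_{f,r,p-1}
    ∀ (r : Fin n → Fin p) (s : Fin p), (s : ℕ) = p - 1 →
      ∀ x : LaurentSeries (FractionRing (MvPowerSeries (Fin n) k)),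
        S r (x.coeff (-1 : ℤ)) = (S₂ (r, s) x).coeff (-1 : ℤ) := by
  intro r s hs x
  have hp : 0 < p := (Fact.out : p.Prime).pos
  have hF₂_supp : ∀ y m, ¬ (p : ℤ) ∣ m → (F₂ y).coeff m = 0 := fun y m hm => by
    rw [hF₂, if_neg hm]
  have hF₂_res : ∀ y, (F₂ y).coeff (-p) = F (y.coeff (-1)) := fun y => by
    rw [hF₂, if_pos (dvd_neg.mpr dvd_rfl), Int.neg_ediv_self _ (by exact_mod_cast hp.ne')]
  have hres : x.coeff (-1) = ∑ r', (∏ i, algebraMap (MvPowerSeries (Fin n) k)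
      (FractionRing (MvPowerSeries (Fin n) k)) (MvPowerSeries.X i) ^ (r' i : ℕ)) *
        F ((S₂ (r', s) x).coeff (-1)) := by
    have h := congrArg (HahnSeries.coeff · (-1)) (hS₂ x)
    rw [LaurentSeries.coeff_neg_one_sum_C_mul_C_add_X_pow_mul
      (fun r => ∏ i, algebraMap _ _ (MvPowerSeries.X i) ^ (r i : ℕ)) _
      (fun rs => F₂ (S₂ rs x)) (fun _ => hF₂_supp _) s (by omega)] at h
    simpa only [hF₂_res] using h
  have hdiff : ∑ r', algebraMap (MvPowerSeries (Fin n) k) (FractionRing (MvPowerSeries (Fin n) k))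
      (∏ i, MvPowerSeries.X i ^ (r' i : ℕ)) *
        F (S r' (x.coeff (-1)) - (S₂ (r', s) x).coeff (-1)) = 0 := by
    simp only [map_prod, map_pow, map_sub, mul_sub, Finset.sum_sub_distrib, sub_eq_zero]
    exact (hS _).symm.trans hres
  exact sub_eq_zero.mp (IsFractionRing.eq_zero_of_sum_algebraMap_mul_eq_zero _ (frobMv p) F hF
    (eq_zero_of_sum_prod_X_pow_mul_frobMv_eq_zero hp) _ hdiff r)

/-- commutation `S_r ∘ res = res ∘ S_{f,r,p-1}` between the residue map and the
section operators on `K` (monomial basis) and on `K((T))` (basis `t^r (f+T)^s`). -/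
theorem stmt5 (p n : ℕ) [Fact p.Prime] (k : Type*) [Field k] [CharP k p] [PerfectRing k p]
    -- the Frobenius F on K = Frac(k[[t]])
    (F : FractionRing (MvPowerSeries (Fin n) k) →+* FractionRing (MvPowerSeries (Fin n) k))
    (hF : ∀ g : MvPowerSeries (Fin n) k,
      F (algebraMap (MvPowerSeries (Fin n) k) (FractionRing (MvPowerSeries (Fin n) k)) g)
        = algebraMap (MvPowerSeries (Fin n) k) (FractionRing (MvPowerSeries (Fin n) k))
            (frobMv p g))
    -- the section operators S_r on K, defined by the expansion over the monomial basis
    (S : (Fin n → Fin p) → FractionRing (MvPowerSeries (Fin n) k) →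
          FractionRing (MvPowerSeries (Fin n) k))
    (hS : ∀ g : FractionRing (MvPowerSeries (Fin n) k),
      g = ∑ r : Fin n → Fin p,
        (∏ i : Fin n,
          (algebraMap (MvPowerSeries (Fin n) k) (FractionRing (MvPowerSeries (Fin n) k))
            (MvPowerSeries.X i)) ^ ((r i : ℕ))) * F (S r g))
    -- the Frobenius F₂ on K((T)), extending F with F₂(T) = T^p
    (F₂ : LaurentSeries (FractionRing (MvPowerSeries (Fin n) k)) →+*
          LaurentSeries (FractionRing (MvPowerSeries (Fin n) k)))
    (hF₂ : ∀ (x : LaurentSeries (FractionRing (MvPowerSeries (Fin n) k))) (m : ℤ),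
      (F₂ x).coeff m = if (p : ℤ) ∣ m then F (x.coeff (m / p)) else 0)
    (f : MvPowerSeries (Fin n) k)
    -- the section operators S_{f,r,s} on K((T)), defined by the expansion over the
    -- basis t^r (f+T)^s
    (S₂ : (Fin n → Fin p) × Fin p → LaurentSeries (FractionRing (MvPowerSeries (Fin n) k)) →
          LaurentSeries (FractionRing (MvPowerSeries (Fin n) k)))
    (hS₂ : ∀ x : LaurentSeries (FractionRing (MvPowerSeries (Fin n) k)),
      x = ∑ rs : (Fin n → Fin p) × Fin p,
        HahnSeries.C (∏ i : Fin n,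
            (algebraMap (MvPowerSeries (Fin n) k) (FractionRing (MvPowerSeries (Fin n) k))
              (MvPowerSeries.X i)) ^ ((rs.1 i : ℕ)))
          * (HahnSeries.C (algebraMap (MvPowerSeries (Fin n) k)
                (FractionRing (MvPowerSeries (Fin n) k)) f)
             + HahnSeries.single (1 : ℤ) 1) ^ ((rs.2 : ℕ))
          * F₂ (S₂ rs x)) :
    -- conclusion: S_r ∘ res = res ∘ S_{f,r,p-1}
    ∀ (r : Fin n → Fin p) (s : Fin p), (s : ℕ) = p - 1 →
      ∀ x : LaurentSeries (FractionRing (MvPowerSeries (Fin n) k)),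
        S r (x.coeff (-1 : ℤ)) = (S₂ (r, s) x).coeff (-1 : ℤ) :=
  stmt5_general p n k F hF S hS F₂ hF₂ f S₂ hS₂
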